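/- arXiv:2002.03757 — 5 statements merged into one kernel-verified Lean document; each statement's English description precedes it below -/
import Mathlib

section
/- Suppose f_ρ = L_K^r h_ρ for some h_ρ ∈ L²_{ρ_X} and 1/2 ≤ r ≤ 1, where L_K is the positive integral operator with ‖L_K‖ ≤ κ². Define f_λ = (L_K + λI)⁻¹ L_K f_ρ for λ > 0. Then ‖f_λ‖_K ≤ κ^{2r−1} ‖h_ρ‖_ρ. -/
/-- **Bound `‖f_λ‖_K ≤ κ^{2r−1} ‖h_ρ‖_ρ`**, in spectral form: by the spectral theorem
for the positive compact self-adjoint operator `L_K` (with eigenvalues `μ i`,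
`0 < μ i ≤ κ²`), `f_ρ = L_K^r h_ρ` has coordinates `μ i ^ r * h i`,
`f_λ = (L_K + λI)⁻¹ L_K f_ρ` has coordinates `μ i ^ (1+r) / (μ i + λ) * h i`,
the `L²_ρ`-norm squared is a sum of squared coordinates and the RKHS norm squared of
`g` is `∑ gᵢ²/μᵢ`.  The claim `‖f_λ‖_K ≤ κ^{2r−1}‖h_ρ‖_ρ` becomes
`∑ (μᵢ^{1+r}/(μᵢ+λ) hᵢ)²/μᵢ ≤ κ^{4r−2} ∑ hᵢ²`. -/
theorem stmt3 (μ h : ℕ → ℝ) (κ lam r : ℝ)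
    (hκ : 0 < κ) (hlam : 0 < lam) (hr1 : 1 / 2 ≤ r) (hr2 : r ≤ 1)
    (hμpos : ∀ i, 0 < μ i) (hμκ : ∀ i, μ i ≤ κ ^ 2)
    (hh : Summable fun i => (h i) ^ 2) :
    (∑' i, (μ i ^ (1 + r) / (μ i + lam) * h i) ^ 2 / μ i)
      ≤ κ ^ (4 * r - 2) * ∑' i, (h i) ^ 2 := by
  have hKc : (0:ℝ) ≤ κ ^ (4 * r - 2) := Real.rpow_nonneg hκ.le _
  have key : ∀ i, (μ i ^ (1 + r) / (μ i + lam) * h i) ^ 2 / μ i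
      ≤ κ ^ (4 * r - 2) * (h i) ^ 2 := by
    intro i
    have hμ := hμpos i
    have hμl : 0 < μ i + lam := by linarith
    have ha : μ i ^ (1 + r) / (μ i + lam) ≤ μ i ^ r := by
      have h1 : μ i ^ (1 + r) / (μ i + lam) ≤ μ i ^ (1 + r) / μ i :=
        div_le_div_of_nonneg_left (Real.rpow_nonneg hμ.le _) hμ (by linarith)
      have h2 : μ i ^ (1 + r) / μ i = μ i ^ r := by
        rw [Real.rpow_add hμ, Real.rpow_one]
        field_simp
      linarith [h1, h2 ▸ h1]
    have hanon : 0 ≤ μ i ^ (1 + r) / (μ i + lam) :=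
      div_nonneg (Real.rpow_nonneg hμ.le _) hμl.le
    have hsq : (μ i ^ (1 + r) / (μ i + lam)) ^ 2 ≤ (μ i ^ r) ^ 2 :=
      pow_le_pow_left₀ hanon ha 2
    have hC : (μ i ^ (1 + r) / (μ i + lam)) ^ 2 / μ i ≤ κ ^ (4 * r - 2) := by
      have h3 : (μ i ^ r) ^ 2 / μ i = μ i ^ (2 * r - 1) := by
        rw [← Real.rpow_natCast (μ i ^ r) 2, ← Real.rpow_mul hμ.le,
          Real.rpow_sub hμ, Real.rpow_one]
        norm_num [mul_comm]
      have h4 : μ i ^ (2 * r - 1) ≤ (κ ^ 2) ^ (2 * r - 1) :=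
        Real.rpow_le_rpow hμ.le (hμκ i) (by linarith)
      have h5 : (κ ^ 2 : ℝ) ^ (2 * r - 1) = κ ^ (4 * r - 2) := by
        rw [← Real.rpow_natCast κ 2, ← Real.rpow_mul hκ.le]
        norm_num; ring_nf
      calc (μ i ^ (1 + r) / (μ i + lam)) ^ 2 / μ i
          ≤ (μ i ^ r) ^ 2 / μ i := by gcongr
        _ = μ i ^ (2 * r - 1) := h3
        _ ≤ (κ ^ 2) ^ (2 * r - 1) := h4
        _ = κ ^ (4 * r - 2) := h5
    calc (μ i ^ (1 + r) / (μ i + lam) * h i) ^ 2 / μ i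
        = (μ i ^ (1 + r) / (μ i + lam)) ^ 2 / μ i * (h i) ^ 2 := by ring
      _ ≤ κ ^ (4 * r - 2) * (h i) ^ 2 :=
          mul_le_mul_of_nonneg_right hC (sq_nonneg _)
  have hsum : Summable fun i => (μ i ^ (1 + r) / (μ i + lam) * h i) ^ 2 / μ i := by
    apply Summable.of_nonneg_of_le
      (fun i => div_nonneg (sq_nonneg _) (hμpos i).le) key (hh.mul_left _)
  calc (∑' i, (μ i ^ (1 + r) / (μ i + lam) * h i) ^ 2 / μ i)
      ≤ ∑' i, κ ^ (4 * r - 2) * (h i) ^ 2 :=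
        Summable.tsum_le_tsum key hsum (hh.mul_left _)
    _ = κ ^ (4 * r - 2) * ∑' i, (h i) ^ 2 := tsum_mul_left
end

section
/- Suppose f_ρ = L_K^r h_ρ for some h_ρ ∈ L²_{ρ_X} with 1/2 ≤ r ≤ 1 and let f_λ = (L_K + λI)⁻¹ L_K f_ρ. Then the approximation error satisfies ‖f_λ − f_ρ‖_ρ ≤ λ^r ‖h_ρ‖_ρ. -/
lemma key_ineq (a lam r : ℝ) (hlam : 0 < lam) (ha : 0 ≤ a)
    (hr1 : 1 / 2 ≤ r) (hr2 : r ≤ 1) (x : ℝ) :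
    (a / (a + lam) * (a ^ r * x) - a ^ r * x) ^ 2 ≤ lam ^ (2 * r) * x ^ 2 := by
  have hr0 : 0 ≤ r := le_trans (by norm_num) hr1
  have hden : 0 < a + lam := by linarith
  have h1 : a / (a + lam) * (a ^ r * x) - a ^ r * x
      = -(lam / (a + lam)) * (a ^ r * x) := by
    field_simp
    ring
  rw [h1]
  have hgm : a ^ r * lam ^ (1 - r) ≤ r * a + (1 - r) * lam :=
    Real.geom_mean_le_arith_mean2_weighted hr0 (by linarith) ha hlam.le (by ring)
  have h2 : lam * a ^ r ≤ lam ^ r * (a + lam) := by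
    have hl : lam ^ r * lam ^ (1 - r) = lam := by
      rw [← Real.rpow_add hlam]; simp
    have hra : r * a + (1 - r) * lam ≤ a + lam := by nlinarith
    calc lam * a ^ r = lam ^ r * (a ^ r * lam ^ (1 - r)) := by
          rw [show lam ^ r * (a ^ r * lam ^ (1 - r))
              = lam ^ r * lam ^ (1 - r) * a ^ r by ring, hl]
      _ ≤ lam ^ r * (a + lam) :=
          mul_le_mul_of_nonneg_left (le_trans hgm hra) (Real.rpow_nonneg hlam.le r)
  have h3 : (-(lam / (a + lam)) * (a ^ r * x)) ^ 2
      = (lam * a ^ r / (a + lam)) ^ 2 * x ^ 2 := by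
    field_simp
  rw [h3]
  have h4 : (lam * a ^ r / (a + lam)) ^ 2 ≤ (lam ^ r) ^ 2 := by
    have hnn : 0 ≤ lam * a ^ r := mul_nonneg hlam.le (Real.rpow_nonneg ha r)
    have : lam * a ^ r / (a + lam) ≤ lam ^ r := by
      rw [div_le_iff₀ hden]; exact h2
    exact pow_le_pow_left₀ (div_nonneg hnn hden.le) this 2
  have h5 : (lam ^ r) ^ 2 = lam ^ (2 * r) := by
    rw [← Real.rpow_natCast (lam ^ r) 2, ← Real.rpow_mul hlam.le]
    norm_num; ring_nf
  calc (lam * a ^ r / (a + lam)) ^ 2 * x ^ 2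
      ≤ (lam ^ r) ^ 2 * x ^ 2 := by nlinarith [sq_nonneg x, h4]
    _ = lam ^ (2 * r) * x ^ 2 := by rw [h5]

/-- **Approximation error bound `‖f_λ − f_ρ‖_ρ ≤ λ^r ‖h_ρ‖_ρ`**, in spectral form:
with eigenvalues `μ i ≥ 0` of the positive compact self-adjoint operator `L_K`,
`f_ρ = L_K^r h_ρ` has coordinates `μ i ^ r * h i` and
`f_λ = (L_K + λI)⁻¹ L_K f_ρ` has coordinates `μ i/(μ i + λ) * (μ i ^ r * h i)`;
the claim becomes `∑ (f_λᵢ − f_ρᵢ)² ≤ (λ^r)² ∑ hᵢ² = λ^{2r} ∑ hᵢ²`. -/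
theorem stmt4 (μ h : ℕ → ℝ) (lam r : ℝ) (hlam : 0 < lam)
    (hr1 : 1 / 2 ≤ r) (hr2 : r ≤ 1) (hμ : ∀ i, 0 ≤ μ i)
    (hh : Summable fun i => (h i) ^ 2) :
    (∑' i, (μ i / (μ i + lam) * (μ i ^ r * h i) - μ i ^ r * h i) ^ 2)
      ≤ lam ^ (2 * r) * ∑' i, (h i) ^ 2 := by
  have key : ∀ i, (μ i / (μ i + lam) * (μ i ^ r * h i) - μ i ^ r * h i) ^ 2
      ≤ lam ^ (2 * r) * (h i) ^ 2 :=
    fun i => key_ineq (μ i) lam r hlam (hμ i) hr1 hr2 (h i)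
  have hs : Summable fun i => lam ^ (2 * r) * (h i) ^ 2 := hh.mul_left _
  have hls : Summable fun i =>
      (μ i / (μ i + lam) * (μ i ^ r * h i) - μ i ^ r * h i) ^ 2 :=
    Summable.of_nonneg_of_le (fun i => sq_nonneg _) key hs
  calc (∑' i, (μ i / (μ i + lam) * (μ i ^ r * h i) - μ i ^ r * h i) ^ 2)
      ≤ ∑' i, lam ^ (2 * r) * (h i) ^ 2 := Summable.tsum_le_tsum key hls hs
    _ = lam ^ (2 * r) * ∑' i, (h i) ^ 2 := tsum_mul_left
end

section
/- Let A and B be invertible positive operators on a Hilbert space with A = L_D + λI and B = L + λI for positive operators L_D, L and λ > 0. Then ‖A⁻¹B‖ ≤ λ⁻¹‖(L+λI)^{−1/2}(L−L_D)‖² + λ^{−1/2}‖(L+λI)^{−1/2}(L−L_D)‖ + 1. -/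
open ContinuousLinearMap in
lemma inv_norm_le_aux {H : Type*} [NormedAddCommGroup H] [InnerProductSpace ℝ H] [CompleteSpace H]
    (T T' : H →L[ℝ] H) (lam : ℝ) (hlam : 0 < lam) (hT : T.IsPositive)
    (hTT' : (T + lam • (1 : H →L[ℝ] H)) ∘L T' = 1) : ‖T'‖ ≤ lam⁻¹ := by
  apply ContinuousLinearMap.opNorm_le_bound _ (by positivity)
  intro y
  have hx : ∀ x : H, lam * ‖x‖ ≤ ‖(T + lam • (1 : H →L[ℝ] H)) x‖ := by
    intro x
    rcases eq_or_ne x 0 with rfl | hx0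
    · simp
    have h1 : lam * ‖x‖ ^ 2 ≤ inner ℝ ((T + lam • (1 : H →L[ℝ] H)) x) x := by
      have := hT.inner_nonneg_left x
      simp only [ContinuousLinearMap.add_apply, ContinuousLinearMap.smul_apply,
        ContinuousLinearMap.one_apply, inner_add_left, real_inner_smul_left,
        real_inner_self_eq_norm_sq]
      nlinarith
    have h2 : (inner ℝ ((T + lam • (1 : H →L[ℝ] H)) x) x : ℝ) ≤
        ‖(T + lam • (1 : H →L[ℝ] H)) x‖ * ‖x‖ := real_inner_le_norm _ _
    have hxn : (0:ℝ) < ‖x‖ := norm_pos_iff.mpr hx0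
    nlinarith
  have happ : (T + lam • (1 : H →L[ℝ] H)) (T' y) = y := by
    have := congrArg (fun f : H →L[ℝ] H => f y) hTT'
    simpa using this
  have := hx (T' y)
  rw [happ] at this
  rw [inv_mul_eq_div, le_div_iff₀ hlam]
  linarith


/-- **Bound on `‖(L_D + λI)⁻¹(L + λI)‖`.** With `A = L_D + λI`, `B = L + λI` for
positive self-adjoint `L_D`, `L` and `λ > 0`, `A'` a two-sided inverse of `A`, `B'`
a two-sided inverse of `B`, and `Bhalf'` a positive self-adjoint square root of `B'`
(i.e. `B^{−1/2}`), one has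
`‖A⁻¹B‖ ≤ λ⁻¹‖B^{−1/2}(L−L_D)‖² + λ^{−1/2}‖B^{−1/2}(L−L_D)‖ + 1`. -/
theorem stmt7 {H : Type*} [NormedAddCommGroup H] [InnerProductSpace ℝ H] [CompleteSpace H]
    (L LD A' B' Bhalf' : H →L[ℝ] H) (lam : ℝ) (hlam : 0 < lam)
    (hL : L.IsPositive) (hLD : LD.IsPositive)
    (hA : (LD + lam • (1 : H →L[ℝ] H)) ∘L A' = 1)
    (hA' : A' ∘L (LD + lam • (1 : H →L[ℝ] H)) = 1)
    (hB : (L + lam • (1 : H →L[ℝ] H)) ∘L B' = 1)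
    (hB' : B' ∘L (L + lam • (1 : H →L[ℝ] H)) = 1)
    (hBhalf : Bhalf' ∘L Bhalf' = B') (hBhalfpos : Bhalf'.IsPositive) :
    ‖A' ∘L (L + lam • (1 : H →L[ℝ] H))‖
      ≤ lam⁻¹ * ‖Bhalf' ∘L (L - LD)‖ ^ 2
        + (Real.sqrt lam)⁻¹ * ‖Bhalf' ∘L (L - LD)‖ + 1 := by
  set D : H →L[ℝ] H := L - LD with hDdef
  -- switch to ring notation
  have hAm : A' * (LD + lam • (1 : H →L[ℝ] H)) = 1 := hA'
  have hBm : (L + lam • (1 : H →L[ℝ] H)) * B' = 1 := hB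
  -- key algebraic identity
  have e2 : A' * D * B' = A' - B' := by
    have hBA : D = (L + lam • (1 : H →L[ℝ] H)) - (LD + lam • (1 : H →L[ℝ] H)) := by
      rw [hDdef]; abel
    rw [hBA, mul_sub, sub_mul, mul_assoc, hBm, mul_one, hAm, one_mul]
  have key : A' * (L + lam • (1 : H →L[ℝ] H)) = A' * D * (B' * D) + B' * D + 1 := by
    have e1 : A' * (L + lam • (1 : H →L[ℝ] H)) = A' * D + 1 := by
      have h : (L + lam • (1 : H →L[ℝ] H)) = D + (LD + lam • (1 : H →L[ℝ] H)) := by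
        rw [hDdef]; abel
      rw [h, mul_add, hAm]
    have e3 : A' * D = A' * D * (B' * D) + B' * D := by
      calc A' * D = (A' - B') * D + B' * D := by rw [sub_mul]; abel
        _ = A' * D * B' * D + B' * D := by rw [← e2]
        _ = A' * D * (B' * D) + B' * D := by rw [mul_assoc (A' * D) B' D]
    rw [e1]
    exact congrArg (fun x => x + 1) e3
  -- norm bounds
  have hAn : ‖A'‖ ≤ lam⁻¹ := inv_norm_le_aux LD A' lam hlam hLD hA
  have hBn : ‖B'‖ ≤ lam⁻¹ := inv_norm_le_aux L B' lam hlam hL hB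
  have hBhsa : ContinuousLinearMap.adjoint Bhalf' = Bhalf' := by
    rw [← ContinuousLinearMap.star_eq_adjoint]; exact hBhalfpos.isSelfAdjoint
  have hBhn : ‖Bhalf'‖ ≤ (Real.sqrt lam)⁻¹ := by
    have h1 : ‖Bhalf'‖ * ‖Bhalf'‖ = ‖B'‖ := by
      rw [← hBhalf, ← ContinuousLinearMap.norm_adjoint_comp_self Bhalf', hBhsa]
    have h2 : ‖Bhalf'‖ ^ 2 ≤ lam⁻¹ := by rw [pow_two, h1]; exact hBn
    calc ‖Bhalf'‖ = Real.sqrt (‖Bhalf'‖ ^ 2) := by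
          rw [Real.sqrt_sq (norm_nonneg _)]
      _ ≤ Real.sqrt lam⁻¹ := Real.sqrt_le_sqrt h2
      _ = (Real.sqrt lam)⁻¹ := Real.sqrt_inv lam
  have hBhalfm : Bhalf' * Bhalf' = B' := hBhalf
  have hDsa : star D = D := by
    rw [hDdef, star_sub, hL.isSelfAdjoint.star_eq, hLD.isSelfAdjoint.star_eq]
  have hDBD : ‖D * (B' * D)‖ = ‖Bhalf' * D‖ ^ 2 := by
    have hadj : ContinuousLinearMap.adjoint (Bhalf' * D) = D * Bhalf' := by
      rw [← ContinuousLinearMap.star_eq_adjoint, star_mul, hDsa,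
        hBhalfpos.isSelfAdjoint.star_eq]
    have heq : D * (B' * D) = ContinuousLinearMap.adjoint (Bhalf' * D) * (Bhalf' * D) := by
      rw [hadj, ← hBhalfm]; simp only [mul_assoc]
    have hn := ContinuousLinearMap.norm_adjoint_comp_self (Bhalf' * D)
    rw [heq, pow_two, ← hn]
    rfl
  have hBD : ‖B' * D‖ ≤ (Real.sqrt lam)⁻¹ * ‖Bhalf' * D‖ := by
    calc ‖B' * D‖ = ‖Bhalf' * (Bhalf' * D)‖ := by rw [← mul_assoc, hBhalfm]
      _ ≤ ‖Bhalf'‖ * ‖Bhalf' * D‖ := norm_mul_le _ _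
      _ ≤ (Real.sqrt lam)⁻¹ * ‖Bhalf' * D‖ :=
          mul_le_mul_of_nonneg_right hBhn (norm_nonneg _)
  have hADBD : ‖A' * D * (B' * D)‖ ≤ lam⁻¹ * ‖Bhalf' * D‖ ^ 2 := by
    calc ‖A' * D * (B' * D)‖ = ‖A' * (D * (B' * D))‖ := by rw [mul_assoc]
      _ ≤ ‖A'‖ * ‖D * (B' * D)‖ := norm_mul_le _ _
      _ ≤ lam⁻¹ * ‖Bhalf' * D‖ ^ 2 := by
          rw [hDBD]; exact mul_le_mul_of_nonneg_right hAn (by positivity)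
  have hone : ‖(1 : H →L[ℝ] H)‖ ≤ 1 := ContinuousLinearMap.norm_id_le
  calc ‖A' ∘L (L + lam • (1 : H →L[ℝ] H))‖
      = ‖A' * D * (B' * D) + B' * D + 1‖ := by rw [← key]; rfl
    _ ≤ ‖A' * D * (B' * D) + B' * D‖ + ‖(1 : H →L[ℝ] H)‖ := norm_add_le _ _
    _ ≤ ‖A' * D * (B' * D)‖ + ‖B' * D‖ + ‖(1 : H →L[ℝ] H)‖ := by
        gcongr; exact norm_add_le _ _
    _ ≤ lam⁻¹ * ‖Bhalf' * D‖ ^ 2 + (Real.sqrt lam)⁻¹ * ‖Bhalf' * D‖ + 1 := by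
        gcongr
    _ = lam⁻¹ * ‖Bhalf' ∘L (L - LD)‖ ^ 2
        + (Real.sqrt lam)⁻¹ * ‖Bhalf' ∘L (L - LD)‖ + 1 := rfl
end

section
/- Suppose A and B are positive operators on a Hilbert space and 0 < τ ≤ 1. Then the Cordes inequality holds: ‖A^τ B^τ‖ ≤ ‖AB‖^τ. -/
open scoped ENNReal NNReal

section pw
variable {H : Type*} [NormedAddCommGroup H] [InnerProductSpace ℂ H] [CompleteSpace H]

noncomputable def pw (A : H →L[ℂ] H) (s : ℝ) : H →L[ℂ] H := cfc (fun x : ℝ => x ^ s) A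

lemma continuous_rpow_const {s : ℝ} (hs : 0 ≤ s) : Continuous (fun x : ℝ => x ^ s) :=
  continuous_iff_continuousAt.2 fun x => Real.continuousAt_rpow_const x s (Or.inr hs)

variable (A : H →L[ℂ] H)

lemma pw_sa (s : ℝ) : IsSelfAdjoint (pw A s) := cfc_predicate _ A

lemma pw_zero (hA : IsSelfAdjoint A) : pw A 0 = 1 := by
  have h : (fun x : ℝ => x ^ (0:ℝ)) = fun _ : ℝ => (1:ℝ) := funext fun x => Real.rpow_zero x
  rw [pw, h]
  exact cfc_const_one ℝ A hA

lemma pw_one (hA : IsSelfAdjoint A) : pw A 1 = A := by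
  have h : cfc (fun x : ℝ => x ^ (1:ℝ)) A = cfc (id : ℝ → ℝ) A :=
    cfc_congr fun x _ => Real.rpow_one x
  rw [pw, h, cfc_id ℝ A]

lemma pw_add (hA0 : (0:H→L[ℂ]H) ≤ A) {s t : ℝ} (hs : 0 ≤ s) (ht : 0 ≤ t)
    (hst : 0 < s + t) : pw A s * pw A t = pw A (s + t) := by
  rw [pw, pw, pw, ← cfc_mul (fun x : ℝ => x ^ s) (fun x : ℝ => x ^ t) A
      (continuous_rpow_const hs).continuousOn (continuous_rpow_const ht).continuousOn]
  exact cfc_congr fun x hx =>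
    (Real.rpow_add' (spectrum_nonneg_of_nonneg hA0 hx) hst.ne').symm

lemma pw_nonneg (hA0 : (0:H→L[ℂ]H) ≤ A) (s : ℝ) : (0:H→L[ℂ]H) ≤ pw A s :=
  cfc_nonneg fun x hx => Real.rpow_nonneg (spectrum_nonneg_of_nonneg hA0 hx) s

lemma pw_norm_le [Nontrivial H] {s : ℝ} (hs : 0 ≤ s) {M : ℝ} (hM : 1 ≤ M) (hAM : ‖A‖ ≤ M)
    (hA0 : (0:H→L[ℂ]H) ≤ A) : ‖pw A s‖ ≤ M ^ s := by
  apply norm_cfc_le (by positivity)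
  intro x hx
  have hx0 : 0 ≤ x := spectrum_nonneg_of_nonneg hA0 hx
  have hxM : x ≤ M := le_trans (le_trans (le_abs_self x) (spectrum.norm_le_norm_of_mem hx)) hAM
  rw [Real.norm_eq_abs, abs_of_nonneg (Real.rpow_nonneg hx0 s)]
  exact Real.rpow_le_rpow hx0 hxM hs

end pw

section key
variable {H : Type*} [NormedAddCommGroup H] [InnerProductSpace ℂ H] [CompleteSpace H]
  [Nontrivial H]

lemma iSup_nnnorm_diff_zero (s : Set ℂ) :
    (⨆ k ∈ s, (‖k‖₊ : ℝ≥0∞)) = ⨆ k ∈ s \ {0}, (‖k‖₊ : ℝ≥0∞) := by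
  apply le_antisymm
  · refine iSup₂_le fun k hk => ?_
    rcases eq_or_ne k 0 with rfl | h
    · simp
    · exact le_iSup₂ (f := fun k _ => (‖k‖₊ : ℝ≥0∞)) k ⟨hk, h⟩
  · exact iSup₂_le fun k hk => le_iSup₂ (f := fun k _ => (‖k‖₊ : ℝ≥0∞)) k hk.1

lemma spectralRadius_mul_comm' {A : Type*} [Ring A] [Algebra ℂ A] (a b : A) :
    spectralRadius ℂ (a * b) = spectralRadius ℂ (b * a) := by
  rw [spectralRadius, spectralRadius, iSup_nnnorm_diff_zero,
    iSup_nnnorm_diff_zero (spectrum ℂ (b*a)), spectrum.nonzero_mul_comm]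

variable (A B : H →L[ℂ] H)

lemma key_midpoint (hA0 : (0:H→L[ℂ]H) ≤ A) (hB0 : (0:H→L[ℂ]H) ≤ B)
    {s t : ℝ} (hs : 0 ≤ s) (ht : 0 ≤ t) (hst : 0 < s + t) :
    ‖pw A ((s+t)/2) * pw B ((s+t)/2)‖₊ ^ 2 ≤ ‖pw A s * pw B s‖₊ * ‖pw A t * pw B t‖₊ := by
  set m := (s+t)/2 with hm
  have hm0 : 0 ≤ m := by positivity
  have hmm : m + m = s + t := by rw [hm]; ring
  have hst' : 0 < m + m := by rw [hmm]; exact hst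
  have hAm : pw A m * pw A m = pw A (s+t) := by rw [pw_add A hA0 hm0 hm0 hst', hmm]
  have hBm : pw B m * pw B m = pw B (s+t) := by rw [pw_add B hB0 hm0 hm0 hst', hmm]
  set X := pw A m * pw B m with hX
  have hstar : star X = pw B m * pw A m := by
    rw [hX, star_mul, (pw_sa A m).star_eq, (pw_sa B m).star_eq]
  have h1 : ‖X‖₊ ^ 2 = ‖pw B m * pw A (s+t) * pw B m‖₊ := by
    rw [sq, ← CStarRing.nnnorm_star_mul_self (x := X), hstar, hX]
    congr 1
    simp only [mul_assoc]
    rw [← mul_assoc (pw A m) (pw A m) (pw B m), hAm]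
  have hsaY : IsSelfAdjoint (pw B m * pw A (s+t) * pw B m) := by
    rw [IsSelfAdjoint, star_mul, star_mul, (pw_sa B m).star_eq, (pw_sa A (s+t)).star_eq, mul_assoc]
  have h2 : (‖pw B m * pw A (s+t) * pw B m‖₊ : ℝ≥0∞)
      = spectralRadius ℂ (pw A (s+t) * pw B (s+t)) := by
    rw [← hsaY.spectralRadius_eq_nnnorm, mul_assoc, spectralRadius_mul_comm' (pw B m),
      mul_assoc, hBm]
  have h3 : spectralRadius ℂ (pw A (s+t) * pw B (s+t))
      ≤ (‖pw A t * pw B t‖₊ * ‖pw A s * pw B s‖₊ : ℝ≥0) := by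
    have e1 : pw A (s+t) * pw B (s+t) = pw A s * (pw A t * pw B t * pw B s) := by
      rw [← pw_add A hA0 hs ht hst]
      have : pw B (s+t) = pw B t * pw B s := by
        rw [pw_add B hB0 ht hs (by rw [add_comm]; exact hst), add_comm t s]
      rw [this]
      simp only [mul_assoc]
    rw [e1, spectralRadius_mul_comm']
    refine le_trans (spectrum.spectralRadius_le_nnnorm _) ?_
    rw [ENNReal.coe_le_coe, mul_assoc]
    calc ‖pw A t * pw B t * (pw B s * pw A s)‖₊
        ≤ ‖pw A t * pw B t‖₊ * ‖pw B s * pw A s‖₊ := nnnorm_mul_le _ _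
      _ = ‖pw A t * pw B t‖₊ * ‖pw A s * pw B s‖₊ := by
          congr 1
          rw [← nnnorm_star, star_mul, (pw_sa A s).star_eq, (pw_sa B s).star_eq]
  have h4 := h2.le.trans h3
  rw [ENNReal.coe_le_coe] at h4
  rw [h1]
  exact h4.trans_eq (mul_comm _ _)

end key

section dyadic
variable {H : Type*} [NormedAddCommGroup H] [InnerProductSpace ℂ H] [CompleteSpace H]
  [Nontrivial H] (A B : H →L[ℂ] H)

lemma dyadic_bound (hA : IsSelfAdjoint A) (hB : IsSelfAdjoint B)
    (hA0 : (0:H→L[ℂ]H) ≤ A) (hB0 : (0:H→L[ℂ]H) ≤ B) :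
    ∀ n k : ℕ, k ≤ 2^n →
      ‖pw A ((k:ℝ)/2^n) * pw B ((k:ℝ)/2^n)‖₊ ^ (2^n : ℕ) ≤ ‖A * B‖₊ ^ k := by
  intro n
  induction n with
  | zero =>
    intro k hk
    interval_cases k
    · simp only [Nat.cast_zero, pow_zero, Nat.cast_ofNat, zero_div, pow_one, pow_zero]
      rw [pw_zero A hA, pw_zero B hB, one_mul, nnnorm_one]
    · simp only [Nat.cast_one, pow_zero, div_one, pow_one]
      rw [pw_one A hA, pw_one B hB]
  | succ n ih =>
    intro k hk
    rcases Nat.even_or_odd k with ⟨j, hj⟩ | ⟨j, hj⟩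
    · subst hj
      have hj2 : j ≤ 2^n := by omega
      have e : ((j+j : ℕ):ℝ)/2^(n+1) = (j:ℝ)/2^n := by push_cast; ring
      rw [e, pow_succ, pow_mul, pow_add]
      exact le_trans (pow_le_pow_left' (ih j hj2) 2) (by rw [sq])
    · subst hj
      have hj2 : j + 1 ≤ 2^n := by omega
      have hj1 : j ≤ 2^n := by omega
      set s : ℝ := (j:ℝ)/2^n with hs
      set t : ℝ := ((j+1:ℕ):ℝ)/2^n with ht
      have hs0 : 0 ≤ s := by positivity
      have ht0 : 0 ≤ t := by
        rw [ht]; positivity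
      have hst : 0 < s + t := by
        have : (0:ℝ) < t := by rw [ht]; push_cast; positivity
        linarith
      have e : ((2*j+1 : ℕ):ℝ)/2^(n+1) = (s + t)/2 := by
        rw [hs, ht]; push_cast; ring
      rw [e, pow_succ', pow_mul]
      calc (‖pw A ((s+t)/2) * pw B ((s+t)/2)‖₊ ^ 2) ^ 2^n
          ≤ (‖pw A s * pw B s‖₊ * ‖pw A t * pw B t‖₊) ^ 2^n :=
            pow_le_pow_left' (key_midpoint A B hA0 hB0 hs0 ht0 hst) _
        _ = ‖pw A s * pw B s‖₊ ^ 2^n * ‖pw A t * pw B t‖₊ ^ 2^n := mul_pow _ _ _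
        _ ≤ ‖A * B‖₊ ^ j * ‖A * B‖₊ ^ (j+1) := mul_le_mul' (ih j hj1) (ih (j+1) hj2)
        _ = ‖A * B‖₊ ^ (2*j+1) := by rw [← pow_add]; ring_nf

end dyadic

lemma rpow_diff_bound {τ q M x : ℝ} (hτ : 0 < τ) (hτq : τ ≤ q) (hM : 1 ≤ M) (hτ1 : τ ≤ 1)
    (hx0 : 0 ≤ x) (hxM : x ≤ M) :
    |x ^ q - x ^ τ| ≤ (q - τ)/τ + M * (M ^ (q - τ) - 1) := by
  have hq : 0 < q := lt_of_lt_of_le hτ hτq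
  have hδ : 0 ≤ q - τ := by linarith
  have hterm1 : 0 ≤ (q - τ)/τ := by positivity
  have hMδ : 1 ≤ M ^ (q - τ) := by
    calc (1:ℝ) = M ^ (0:ℝ) := (Real.rpow_zero M).symm
      _ ≤ M ^ (q - τ) := Real.rpow_le_rpow_of_exponent_le hM hδ
  have hterm2 : 0 ≤ M * (M ^ (q - τ) - 1) := by nlinarith
  rcases eq_or_lt_of_le hx0 with rfl | hx
  · rw [Real.zero_rpow hq.ne', Real.zero_rpow hτ.ne', sub_zero, abs_zero]
    linarith
  rcases le_total x 1 with hx1 | hx1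
  · -- x ∈ (0,1] : x^τ - x^q ≤ (q-τ)/τ
    have hmono : x ^ q ≤ x ^ τ := Real.rpow_le_rpow_of_exponent_ge hx hx1 hτq
    rw [abs_of_nonpos (by linarith), neg_sub]
    have hsplit : x ^ q = x ^ τ * x ^ (q - τ) := by
      rw [← Real.rpow_add hx]; ring_nf
    have hlog1 : 1 - x ^ (q - τ) ≤ (q - τ) * (-Real.log x) := by
      have h1 := Real.log_le_sub_one_of_pos (Real.rpow_pos_of_pos hx (q - τ))
      rw [Real.log_rpow hx] at h1
      nlinarith [h1]
    have hxτpos : 0 < x ^ τ := Real.rpow_pos_of_pos hx τ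
    have hxτ1 : x ^ τ ≤ 1 := Real.rpow_le_one hx0 hx1 hτ.le
    have hylogy : x ^ τ * (-Real.log (x ^ τ)) ≤ 1 := by
      have h2 := Real.log_le_sub_one_of_pos (show (0:ℝ) < (x ^ τ)⁻¹ by positivity)
      rw [Real.log_inv] at h2
      have := mul_le_mul_of_nonneg_left h2 hxτpos.le
      rw [mul_sub, mul_inv_cancel₀ hxτpos.ne'] at this
      nlinarith
    have hkey : x ^ τ * (-Real.log x) ≤ 1/τ := by
      rw [Real.log_rpow hx] at hylogy
      rw [le_div_iff₀ hτ]
      nlinarith [hylogy]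
    have : x ^ τ - x ^ q = x ^ τ * (1 - x ^ (q - τ)) := by rw [hsplit]; ring
    rw [this]
    calc x ^ τ * (1 - x ^ (q - τ)) ≤ x ^ τ * ((q - τ) * (-Real.log x)) := by
          apply mul_le_mul_of_nonneg_left hlog1 hxτpos.le
      _ = (q - τ) * (x ^ τ * (-Real.log x)) := by ring
      _ ≤ (q - τ) * (1/τ) := by
          apply mul_le_mul_of_nonneg_left hkey hδ
      _ = (q - τ)/τ := by ring
      _ ≤ (q - τ)/τ + M * (M ^ (q - τ) - 1) := by linarith
  · -- x ∈ [1,M] : x^q - x^τ ≤ M (M^δ - 1)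
    have hmono : x ^ τ ≤ x ^ q := Real.rpow_le_rpow_of_exponent_le hx1 hτq
    rw [abs_of_nonneg (by linarith)]
    have hsplit : x ^ q = x ^ τ * x ^ (q - τ) := by
      rw [← Real.rpow_add hx]; ring_nf
    have h1 : x ^ τ ≤ M := by
      calc x ^ τ ≤ M ^ τ := Real.rpow_le_rpow hx0 hxM hτ.le
        _ ≤ M ^ (1:ℝ) := Real.rpow_le_rpow_of_exponent_le hM hτ1
        _ = M := Real.rpow_one M
    have h2 : x ^ (q - τ) ≤ M ^ (q - τ) := Real.rpow_le_rpow hx0 hxM hδ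
    have h3 : 1 ≤ x ^ τ := Real.one_le_rpow hx1 hτ.le
    have : x ^ q - x ^ τ = x ^ τ * (x ^ (q - τ) - 1) := by rw [hsplit]; ring
    rw [this]
    have h4 : 0 ≤ x ^ (q - τ) - 1 := by
      have := Real.one_le_rpow hx1 hδ
      linarith
    calc x ^ τ * (x ^ (q - τ) - 1) ≤ M * (x ^ (q - τ) - 1) := by
          apply mul_le_mul_of_nonneg_right h1 h4
      _ ≤ M * (M ^ (q - τ) - 1) := by
          apply mul_le_mul_of_nonneg_left (by linarith) (by linarith)
      _ ≤ (q - τ)/τ + M * (M ^ (q - τ) - 1) := by linarith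

section final
variable {H : Type*} [NormedAddCommGroup H] [InnerProductSpace ℂ H] [CompleteSpace H]

lemma pw_diff_norm_le [Nontrivial H] (A : H →L[ℂ] H) (hA0 : (0:H→L[ℂ]H) ≤ A)
    {τ q M : ℝ} (hτ : 0 < τ) (hτq : τ ≤ q) (hτ1 : τ ≤ 1) (hM : 1 ≤ M) (hAM : ‖A‖ ≤ M) :
    ‖pw A q - pw A τ‖ ≤ (q - τ)/τ + M * (M ^ (q - τ) - 1) := by
  have hδ : 0 ≤ q - τ := by linarith
  have hMδ : 1 ≤ M ^ (q - τ) := by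
    calc (1:ℝ) = M ^ (0:ℝ) := (Real.rpow_zero M).symm
      _ ≤ M ^ (q - τ) := Real.rpow_le_rpow_of_exponent_le hM hδ
  have hrhs : 0 ≤ (q - τ)/τ + M * (M ^ (q - τ) - 1) := by
    have : 0 ≤ (q - τ)/τ := by positivity
    nlinarith
  rw [pw, pw, ← cfc_sub (fun x : ℝ => x ^ q) (fun x : ℝ => x ^ τ) A
      (continuous_rpow_const (le_trans hτ.le hτq)).continuousOn
      (continuous_rpow_const hτ.le).continuousOn]
  apply norm_cfc_le hrhs
  intro x hx
  have hx0 : 0 ≤ x := spectrum_nonneg_of_nonneg hA0 hx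
  have hxM : x ≤ M := le_trans (le_trans (le_abs_self x) (spectrum.norm_le_norm_of_mem hx)) hAM
  rw [Real.norm_eq_abs]
  exact rpow_diff_bound hτ hτq hM hτ1 hx0 hxM

theorem stmt14' {H : Type*} [NormedAddCommGroup H] [InnerProductSpace ℂ H] [CompleteSpace H]
    (A B : H →L[ℂ] H) (τ : ℝ) (hτ0 : 0 < τ) (hτ1 : τ ≤ 1)
    (hA : A.IsPositive) (hB : B.IsPositive) :
    ‖cfc (fun x : ℝ => x ^ τ) A * cfc (fun x : ℝ => x ^ τ) B‖ ≤ ‖A * B‖ ^ τ := by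
  rcases subsingleton_or_nontrivial H with hH | hH
  · have h0 : (cfc (fun x : ℝ => x ^ τ) A * cfc (fun x : ℝ => x ^ τ) B) = 0 :=
      Subsingleton.elim _ _
    rw [h0, norm_zero]
    exact Real.rpow_nonneg (norm_nonneg _) τ
  have hA0 : (0:H→L[ℂ]H) ≤ A := (ContinuousLinearMap.nonneg_iff_isPositive A).2 hA
  have hB0 : (0:H→L[ℂ]H) ≤ B := (ContinuousLinearMap.nonneg_iff_isPositive B).2 hB
  have hAsa : IsSelfAdjoint A := hA.isSelfAdjoint
  have hBsa : IsSelfAdjoint B := hB.isSelfAdjoint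
  set M : ℝ := max 1 (max ‖A‖ ‖B‖) with hMdef
  have hM : 1 ≤ M := le_max_left _ _
  have hM0 : 0 < M := lt_of_lt_of_le one_pos hM
  have hAM : ‖A‖ ≤ M := le_trans (le_max_left _ _) (le_max_right _ _)
  have hBM : ‖B‖ ≤ M := le_trans (le_max_right _ _) (le_max_right _ _)
  set C : ℝ := ‖A * B‖ with hCdef
  have hC0 : 0 ≤ C := norm_nonneg _
  show ‖pw A τ * pw B τ‖ ≤ C ^ τ
  -- dyadic approximations from above
  set q : ℕ → ℝ := fun i => ((⌈τ * 2^i⌉₊ : ℕ) : ℝ)/2^i with hqdef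
  have hpow2 : ∀ i : ℕ, (0:ℝ) < 2^i := fun i => by positivity
  have hql : ∀ i, τ ≤ q i := by
    intro i
    rw [hqdef, le_div_iff₀ (hpow2 i)]
    exact Nat.le_ceil _
  have hq1 : ∀ i, q i ≤ 1 := by
    intro i
    rw [hqdef, div_le_one (hpow2 i)]
    have : (⌈τ * 2^i⌉₊ : ℕ) ≤ 2^i := Nat.ceil_le.2 (by
      calc τ * 2^i ≤ 1 * 2^i := by nlinarith [hpow2 i]
        _ = ((2^i : ℕ) : ℝ) := by push_cast; ring)
    calc ((⌈τ * 2^i⌉₊ : ℕ) : ℝ) ≤ ((2^i : ℕ) : ℝ) := by exact_mod_cast this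
      _ = 2^i := by push_cast; ring
  have hqu : ∀ i, q i ≤ τ + (1/2:ℝ)^i := by
    intro i
    rw [hqdef, div_le_iff₀ (hpow2 i)]
    have h1 : ((⌈τ * 2^i⌉₊ : ℕ) : ℝ) < τ * 2^i + 1 :=
      Nat.ceil_lt_add_one (by positivity)
    have : (τ + (1/2:ℝ)^i) * 2^i = τ * 2^i + 1 := by
      rw [add_mul, div_pow, one_pow, div_mul_cancel₀]
      exact (hpow2 i).ne'
    rw [this]
    linarith
  -- step 1 : bound at dyadic points
  have step1 : ∀ i, ‖pw A (q i) * pw B (q i)‖ ≤ C ^ (q i) := by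
    intro i
    have hk : (⌈τ * 2^i⌉₊ : ℕ) ≤ 2^i := Nat.ceil_le.2 (by
      calc τ * 2^i ≤ 1 * 2^i := by nlinarith [hpow2 i]
        _ = ((2^i : ℕ) : ℝ) := by push_cast; ring)
    have hd : ‖pw A (q i) * pw B (q i)‖₊ ^ (2^i : ℕ) ≤ ‖A * B‖₊ ^ (⌈τ * 2^i⌉₊ : ℕ) :=
      dyadic_bound A B hAsa hBsa hA0 hB0 i ⌈τ * 2^i⌉₊ hk
    have hd' : ‖pw A (q i) * pw B (q i)‖ ^ (2^i : ℕ) ≤ C ^ (⌈τ * 2^i⌉₊ : ℕ) := by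
      have := NNReal.coe_le_coe.2 hd
      push_cast at this
      convert this using 2 <;> simp [hCdef]
    have hCq : (C ^ (q i)) ^ (2^i : ℕ) = C ^ (⌈τ * 2^i⌉₊ : ℕ) := by
      rw [← Real.rpow_natCast (C ^ (q i)) (2^i), ← Real.rpow_mul hC0, ← Real.rpow_natCast C]
      congr 1
      rw [hqdef]
      push_cast
      field_simp
    refine le_of_pow_le_pow_left₀ (a := ‖pw A (q i) * pw B (q i)‖) (n := 2^i)
      (by positivity) (Real.rpow_nonneg hC0 _) ?_
    rw [hCq]
    exact hd'
  -- step 2 : perturbation bound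
  set e : ℕ → ℝ := fun i => (q i - τ)/τ + M * (M ^ (q i - τ) - 1) with hedef
  have hpwAτ : ‖pw A τ‖ ≤ M := by
    calc ‖pw A τ‖ ≤ M ^ τ := pw_norm_le A hτ0.le hM hAM hA0
      _ ≤ M ^ (1:ℝ) := Real.rpow_le_rpow_of_exponent_le hM hτ1
      _ = M := Real.rpow_one M
  have step2 : ∀ i, ‖pw A τ * pw B τ‖ ≤ C ^ (q i) + 2 * M * e i := by
    intro i
    have hpwBq : ‖pw B (q i)‖ ≤ M := by
      calc ‖pw B (q i)‖ ≤ M ^ (q i) := pw_norm_le B (le_trans hτ0.le (hql i)) hM hBM hB0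
        _ ≤ M ^ (1:ℝ) := Real.rpow_le_rpow_of_exponent_le hM (hq1 i)
        _ = M := Real.rpow_one M
    have hdA : ‖pw A (q i) - pw A τ‖ ≤ e i := pw_diff_norm_le A hA0 hτ0 (hql i) hτ1 hM hAM
    have hdB : ‖pw B (q i) - pw B τ‖ ≤ e i := pw_diff_norm_le B hB0 hτ0 (hql i) hτ1 hM hBM
    have he0 : 0 ≤ e i := le_trans (norm_nonneg _) hdA
    have hdecomp : pw A τ * pw B τ
        = pw A (q i) * pw B (q i) - (pw A (q i) - pw A τ) * pw B (q i)
          - pw A τ * (pw B (q i) - pw B τ) := by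
      noncomm_ring
    calc ‖pw A τ * pw B τ‖
        ≤ ‖pw A (q i) * pw B (q i) - (pw A (q i) - pw A τ) * pw B (q i)‖
          + ‖pw A τ * (pw B (q i) - pw B τ)‖ := by rw [hdecomp]; exact norm_sub_le _ _
      _ ≤ ‖pw A (q i) * pw B (q i)‖ + ‖(pw A (q i) - pw A τ) * pw B (q i)‖
          + ‖pw A τ * (pw B (q i) - pw B τ)‖ := by
            gcongr
            exact norm_sub_le _ _
      _ ≤ C ^ (q i) + e i * M + M * e i := by
            gcongr
            · exact step1 i
            · exact le_trans (norm_mul_le _ _) (mul_le_mul hdA hpwBq (norm_nonneg _) he0)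
            · exact le_trans (norm_mul_le _ _)
                (mul_le_mul hpwAτ hdB (norm_nonneg _) (le_trans (norm_nonneg _) hpwAτ))
      _ = C ^ (q i) + 2 * M * e i := by ring
  -- step 3 : take the limit
  have hq_tendsto : Filter.Tendsto q Filter.atTop (nhds τ) := by
    have h2 : Filter.Tendsto (fun i : ℕ => τ + (1/2:ℝ)^i) Filter.atTop (nhds τ) := by
      have := tendsto_pow_atTop_nhds_zero_of_lt_one (r := (1/2:ℝ)) (by norm_num) (by norm_num)
      simpa using Filter.Tendsto.add (tendsto_const_nhds (x := τ)) this
    exact tendsto_of_tendsto_of_tendsto_of_le_of_le tendsto_const_nhds h2 hql hqu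
  have hδ_tendsto : Filter.Tendsto (fun i => q i - τ) Filter.atTop (nhds 0) := by
    simpa using hq_tendsto.sub (tendsto_const_nhds (x := τ))
  have he_tendsto : Filter.Tendsto e Filter.atTop (nhds 0) := by
    have h1 : Filter.Tendsto (fun i => (q i - τ)/τ) Filter.atTop (nhds 0) := by
      simpa using hδ_tendsto.div_const τ
    have h2 : Filter.Tendsto (fun i => M ^ (q i - τ)) Filter.atTop (nhds 1) := by
      have hc := (Real.continuousAt_const_rpow (a := M) (b := 0) hM0.ne').tendsto
      rw [Real.rpow_zero] at hc
      exact hc.comp hδ_tendsto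
    have h3 : Filter.Tendsto (fun i => M * (M ^ (q i - τ) - 1)) Filter.atTop (nhds 0) := by
      have := (h2.sub (tendsto_const_nhds (x := (1:ℝ)))).const_mul M
      simpa using this
    simpa using h1.add h3
  have hCq_tendsto : Filter.Tendsto (fun i => C ^ (q i)) Filter.atTop (nhds (C ^ τ)) := by
    rcases eq_or_lt_of_le hC0 with hC | hC
    · have hz : ∀ i, C ^ (q i) = 0 := fun i =>
        by rw [← hC]; exact Real.zero_rpow (ne_of_gt (lt_of_lt_of_le hτ0 (hql i)))
      have hzt : C ^ τ = 0 := by rw [← hC]; exact Real.zero_rpow hτ0.ne'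
      rw [hzt]
      simp only [hz]
      exact tendsto_const_nhds
    · exact ((Real.continuousAt_const_rpow (a := C) (b := τ) hC.ne').tendsto).comp hq_tendsto
  have hfinal : Filter.Tendsto (fun i => C ^ (q i) + 2 * M * e i) Filter.atTop (nhds (C ^ τ)) := by
    have := hCq_tendsto.add ((he_tendsto.const_mul (2*M)))
    simpa using this
  exact ge_of_tendsto' hfinal step2
end final


/-- **Cordes inequality.** For bounded positive self-adjoint operators `A`, `B` on a
Hilbert space and `0 < τ ≤ 1`, with fractional powers defined by the continuous
functional calculus, `‖A^τ B^τ‖ ≤ ‖A B‖^τ`. -/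
theorem stmt14 {H : Type*} [NormedAddCommGroup H] [InnerProductSpace ℂ H] [CompleteSpace H]
    (A B : H →L[ℂ] H) (τ : ℝ) (hτ0 : 0 < τ) (hτ1 : τ ≤ 1)
    (hA : A.IsPositive) (hB : B.IsPositive) :
    ‖cfc (fun x : ℝ => x ^ τ) A * cfc (fun x : ℝ => x ^ τ) B‖ ≤ ‖A * B‖ ^ τ :=
  stmt14' A B τ hτ0 hτ1 hA hB
end

section
/- Let f_{D_j,λ} = (L_{K,D_j} + λI)⁻¹ S_{D_j}^T y_{D_j} for j = 1,…,m and f̄_{D,λ} = ∑_j (|D_j|/|D|) f_{D_j,λ}, with ∑_j (|D_j|/|D|) S_{D_j}^T y_{D_j} = S_D^T y_D and ∑_j (|D_j|/|D|) L_{K,D_j} = L_{K,D}. Then f̄_{D,λ} − f_λ = ∑_j (|D_j|/|D|)(L_K + λI)⁻¹(L_K − L_{K,D_j})(f_{D_j,λ} − f_λ) + (L_K + λI)⁻¹(L_K − L_{K,D}) f_λ + (L_K + λI)⁻¹(S_D^T y_D − L_K f_ρ), where f_λ = (L_K + λI)⁻¹ L_K f_ρ. -/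
/-- **Error decomposition for distributed KRR.** With weights `w j = |D_j|/|D| ≥ 0`
summing to `1`, local two-sided resolvents `RD j = (L_{K,D_j} + λI)⁻¹`, global
resolvent `R = (L_K + λI)⁻¹`, `u j = S_{D_j}^T y_{D_j}` with `∑ w j • u j = u = S_D^T y_D`,
`∑ w j • L_{K,D_j} = L_{K,D}`, `g = L_K f_ρ`, `f_λ = R g`,
`f_{D_j,λ} = RD j (u j)` and `f̄_{D,λ} = ∑ w j • f_{D_j,λ}`:
`f̄_{D,λ} − f_λ = ∑_j w_j (L_K+λI)⁻¹(L_K − L_{K,D_j})(f_{D_j,λ} − f_λ)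
  + (L_K+λI)⁻¹(L_K − L_{K,D}) f_λ + (L_K+λI)⁻¹(S_D^T y_D − L_K f_ρ)`. -/
theorem stmt17 {H : Type*} [NormedAddCommGroup H] [InnerProductSpace ℝ H] [CompleteSpace H]
    (m : ℕ) (w : Fin m → ℝ) (hw : ∀ j, 0 ≤ w j) (hw1 : ∑ j, w j = 1)
    (LK LKD : H →L[ℝ] H) (LKDj : Fin m → (H →L[ℝ] H))
    (R : H →L[ℝ] H) (RD : Fin m → (H →L[ℝ] H)) (lam : ℝ) (hlam : 0 < lam)
    (hLK : LK.IsPositive) (hLKD : LKD.IsPositive) (hLKDj : ∀ j, (LKDj j).IsPositive)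
    (hR : (LK + lam • (1 : H →L[ℝ] H)) ∘L R = 1)
    (hR' : R ∘L (LK + lam • (1 : H →L[ℝ] H)) = 1)
    (hRD : ∀ j, (LKDj j + lam • (1 : H →L[ℝ] H)) ∘L RD j = 1)
    (hRD' : ∀ j, RD j ∘L (LKDj j + lam • (1 : H →L[ℝ] H)) = 1)
    (u g : H) (uj : Fin m → H)
    (hu : ∑ j, w j • uj j = u) (hLsum : ∑ j, w j • LKDj j = LKD)
    (flam fbar : H) (fj : Fin m → H)
    (hfj : ∀ j, fj j = RD j (uj j)) (hfl : flam = R g)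
    (hfbar : fbar = ∑ j, w j • fj j) :
    fbar - flam
      = (∑ j, w j • R ((LK - LKDj j) (fj j - flam)))
        + R ((LK - LKD) flam) + R (u - g) := by

  have hflam_eq : (LK + lam • (1 : H →L[ℝ] H)) flam = g := by
    rw [hfl]
    have := congrArg (fun T : H →L[ℝ] H => T g) hR
    simpa using this
  have hRinv : ∀ x : H, R ((LK + lam • (1 : H →L[ℝ] H)) x) = x := by
    intro x
    have := congrArg (fun T : H →L[ℝ] H => T x) hR'
    simpa using this
  have hg' : LK flam + lam • flam = g := by
    simpa [ContinuousLinearMap.add_apply, ContinuousLinearMap.smul_apply] using hflam_eq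
  have key : ∀ j, fj j - flam
      = R ((LK - LKDj j) (fj j - flam)) + (R ((LK - LKDj j) flam) + R (uj j - g)) := by
    intro j
    have huj' : (LKDj j) (fj j) + lam • fj j = uj j := by
      have := congrArg (fun T : H →L[ℝ] H => T (uj j)) (hRD j)
      simpa [hfj j, ContinuousLinearMap.add_apply, ContinuousLinearMap.smul_apply] using this
    have expand : (LK + lam • (1 : H →L[ℝ] H)) (fj j - flam)
        = (LK - LKDj j) (fj j - flam) + ((LK - LKDj j) flam + (uj j - g)) := by
      rw [← huj', ← hg']
      simp only [ContinuousLinearMap.add_apply, ContinuousLinearMap.sub_apply,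
        ContinuousLinearMap.smul_apply, ContinuousLinearMap.one_apply, map_sub, smul_sub]
      abel
    calc fj j - flam = R ((LK + lam • (1 : H →L[ℝ] H)) (fj j - flam)) := (hRinv _).symm
      _ = _ := by rw [expand, map_add, map_add]
  have hsum : fbar - flam = ∑ j, w j • (fj j - flam) := by
    rw [hfbar]
    simp [smul_sub, Finset.sum_sub_distrib, ← Finset.sum_smul, hw1]
  have h2 : ∑ j, w j • R ((LK - LKDj j) flam) = R ((LK - LKD) flam) := by
    have hL : ∑ j, w j • (LKDj j) flam = LKD flam := by
      have := congrArg (fun T : H →L[ℝ] H => T flam) hLsum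
      simpa [ContinuousLinearMap.sum_apply, ContinuousLinearMap.smul_apply] using this
    have hv : ∑ j, w j • ((LK - LKDj j) flam) = (LK - LKD) flam := by
      simp only [ContinuousLinearMap.sub_apply, smul_sub, Finset.sum_sub_distrib, hL,
        ← Finset.sum_smul, hw1, one_smul]
    have hswap : ∑ j, w j • R ((LK - LKDj j) flam)
        = R (∑ j, w j • ((LK - LKDj j) flam)) := by
      rw [map_sum]
      exact Finset.sum_congr rfl fun j _ => (map_smul R _ _).symm
    rw [hswap, hv]
  have h3 : ∑ j, w j • R (uj j - g) = R (u - g) := by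
    have hv : ∑ j, w j • (uj j - g) = u - g := by
      simp only [smul_sub, Finset.sum_sub_distrib, hu, ← Finset.sum_smul, hw1, one_smul]
    have hswap : ∑ j, w j • R (uj j - g) = R (∑ j, w j • (uj j - g)) := by
      rw [map_sum]
      exact Finset.sum_congr rfl fun j _ => (map_smul R _ _).symm
    rw [hswap, hv]
  rw [hsum]
  calc ∑ j, w j • (fj j - flam)
      = ∑ j, (w j • R ((LK - LKDj j) (fj j - flam))
          + (w j • R ((LK - LKDj j) flam) + w j • R (uj j - g))) := by
        refine Finset.sum_congr rfl fun j _ => ?_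
        conv_lhs => rw [key j]
        rw [smul_add, smul_add]
    _ = (∑ j, w j • R ((LK - LKDj j) (fj j - flam)))
          + ((∑ j, w j • R ((LK - LKDj j) flam)) + ∑ j, w j • R (uj j - g)) := by
        rw [Finset.sum_add_distrib, Finset.sum_add_distrib]
    _ = _ := by rw [h2, h3, ← add_assoc]
end
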